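/- The 6-dimensional nilpotent Lie algebra with structure (0,0,0,0,0,12+34) (de₁=⋯=de₅=0, de₆=e₁∧e₂+e₃∧e₄) admits no symplectic form: there is no closed 2-form ω ∈ Λ²g* with ω∧ω∧ω ≠ 0. -/
import Mathlib


/- STATEMENT 11: the 6-dimensional nilpotent Lie algebra `(0,0,0,0,0,12+34)`
(`de₁=⋯=de₅=0`, `de₆=e₁∧e₂+e₃∧e₄`) admits no symplectic form: no closed 2-form
`ω` satisfies `ω³ ≠ 0`.  Forms are modelled in `Λ•g*` with `g* = Fin 6 → ℝ`. -/

noncomputable section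

open ExteriorAlgebra

/-- The basis 1-forms `e₁,…,e₆` (0-indexed). -/
def e (i : Fin 6) : ExteriorAlgebra ℝ (Fin 6 → ℝ) := ι ℝ (Pi.single i 1)

/-- The values of `d` on the basis: `(0,0,0,0,0,12+34)` (0-indexed below). -/
def D : Fin 6 → ExteriorAlgebra ℝ (Fin 6 → ℝ) :=
  ![0, 0, 0, 0, 0, e 0 * e 1 + e 2 * e 3]

/-- The 2-form `∑ k_{ij} e_i ∧ e_j` with coefficients `k`. -/
def twoForm (k : Fin 6 → Fin 6 → ℝ) : ExteriorAlgebra ℝ (Fin 6 → ℝ) :=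
  ∑ i, ∑ j, k i j • (e i * e j)

/-- `d` of the 2-form with coefficients `k` (derivation rule
`d(e_i∧e_j) = de_i∧e_j − e_i∧de_j`). -/
def dTwo (k : Fin 6 → Fin 6 → ℝ) : ExteriorAlgebra ℝ (Fin 6 → ℝ) :=
  ∑ i, ∑ j, k i j • (D i * e j - e i * D j)

/-- Pairing a 3-form against the coordinates `c 0, c 1, c 2` via a determinant. -/
def φ (c : Fin 3 → Fin 6) : (Fin 6 → ℝ) [⋀^Fin 3]→ₗ[ℝ] ℝ :=
  (Matrix.detRowAlternating).compLinearMap (LinearMap.funLeft ℝ ℝ c)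

/-- The extension of `φ c` to the whole exterior algebra (zero outside degree 3). -/
def Φ (c : Fin 3 → Fin 6) : ExteriorAlgebra ℝ (Fin 6 → ℝ) →ₗ[ℝ] ℝ :=
  liftAlternating (Function.update (fun _ => 0) 3 (φ c))

lemma Phi_eee (c : Fin 3 → Fin 6) (a b d : Fin 6) :
    Φ c (e a * (e b * e d)) =
      Matrix.det (Matrix.of fun i j =>
        (![(Pi.single a 1 : Fin 6 → ℝ), Pi.single b 1, Pi.single d 1]) i (c j)) := by
  have h : e a * (e b * e d) = ιMulti ℝ 3 ![Pi.single a 1, Pi.single b 1, Pi.single d 1] := by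
    rw [ιMulti_apply]
    simp [List.ofFn_succ, e, mul_assoc]
  rw [h, Φ, liftAlternating_apply_ιMulti, Function.update_self, φ,
    AlternatingMap.compLinearMap_apply]
  rfl

/-- Any product of six basis 1-forms coming from the first five coordinates vanishes
(pigeonhole + alternation). -/
lemma prod6 (v : Fin 6 → Fin 5) :
    e (v 0).castSucc * e (v 1).castSucc * (e (v 2).castSucc * e (v 3).castSucc) *
      (e (v 4).castSucc * e (v 5).castSucc) = 0 := by
  have h : e (v 0).castSucc * e (v 1).castSucc * (e (v 2).castSucc * e (v 3).castSucc) *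
      (e (v 4).castSucc * e (v 5).castSucc)
      = ιMulti ℝ 6 (fun t => Pi.single (v t).castSucc 1) := by
    rw [ιMulti_apply]
    simp [List.ofFn_succ, e, mul_assoc, show Fin.succ (2:Fin 5) = 3 from rfl,
      show Fin.succ (2:Fin 4) = 3 from rfl, show Fin.succ (2:Fin 3) = 3 from rfl,
      show Fin.succ (3:Fin 5) = 4 from rfl, show Fin.succ (3:Fin 4) = 4 from rfl,
      show Fin.succ (4:Fin 5) = 5 from rfl]
  obtain ⟨t, s, hts, hv⟩ := Fintype.exists_ne_map_eq_of_card_lt v (by norm_num)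
  rw [h]
  exact (ιMulti ℝ 6 (M := Fin 6 → ℝ)).map_eq_zero_of_eq (fun t => Pi.single (v t).castSucc 1)
    (show Pi.single (v t).castSucc 1 = Pi.single (v s).castSucc 1 by rw [hv]) hts

lemma e_swap (i j : Fin 6) : e i * e j = -(e j * e i) :=
  eq_neg_of_add_eq_zero_left (ι_add_mul_swap _ _)

lemma e_sq (i : Fin 6) : e i * e i = 0 := ι_sq_zero _

set_option maxHeartbeats 2000000 in
/-- there is no closed 2-form `ω` with `ω∧ω∧ω ≠ 0`. -/
theorem no_symplectic_0_0_0_0_0_12_34 :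
    ¬ ∃ k : Fin 6 → Fin 6 → ℝ,
      dTwo k = 0 ∧ twoForm k * twoForm k * twoForm k ≠ 0 := by
  rintro ⟨k, hd, hne⟩
  apply hne
  -- Expand `dTwo k` into an explicit combination of monomials.
  rw [dTwo] at hd
  simp only [Fin.sum_univ_six, show D 0 = 0 from rfl, show D 1 = 0 from rfl,
    show D 2 = 0 from rfl, show D 3 = 0 from rfl, show D 4 = 0 from rfl,
    show D 5 = e 0 * e 1 + e 2 * e 3 from rfl, zero_mul, mul_zero, sub_zero, zero_sub,
    smul_zero, smul_neg, add_mul, mul_add, mul_assoc, zero_add, add_zero, sub_self,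
    smul_sub, smul_add] at hd
  -- Extract the coefficient relations `k i 5 = k 5 i` using the functionals `Φ c`.
  have h0 := congrArg (Φ ![2,3,0]) hd
  have h1 := congrArg (Φ ![2,3,1]) hd
  have h2 := congrArg (Φ ![0,1,2]) hd
  have h3 := congrArg (Φ ![0,1,3]) hd
  have h4 := congrArg (Φ ![0,1,4]) hd
  simp only [map_add, map_neg, map_sub, map_smul, map_zero, Phi_eee] at h0 h1 h2 h3 h4
  simp [Matrix.det_fin_three, Pi.single_apply, Matrix.of_apply, Matrix.vecHead,
    Matrix.vecTail] at h0 h1 h2 h3 h4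
  -- By closedness, `ω` only involves the first five coordinates.
  have hres : twoForm k =
      ∑ i : Fin 5, ∑ j : Fin 5, k i.castSucc j.castSucc • (e i.castSucc * e j.castSucc) := by
    rw [twoForm]
    simp only [Fin.sum_univ_six, Fin.sum_univ_five,
      show Fin.castSucc (0 : Fin 5) = 0 from rfl, show Fin.castSucc (1 : Fin 5) = 1 from rfl,
      show Fin.castSucc (2 : Fin 5) = 2 from rfl, show Fin.castSucc (3 : Fin 5) = 3 from rfl,
      show Fin.castSucc (4 : Fin 5) = 4 from rfl]
    rw [show k 0 5 = k 5 0 by linarith, show k 1 5 = k 5 1 by linarith,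
      show k 2 5 = k 5 2 by linarith, show k 3 5 = k 5 3 by linarith,
      show k 4 5 = k 5 4 by linarith]
    simp only [e_sq, show e 0 * e 5 = -(e 5 * e 0) from e_swap _ _,
      show e 1 * e 5 = -(e 5 * e 1) from e_swap _ _,
      show e 2 * e 5 = -(e 5 * e 2) from e_swap _ _,
      show e 3 * e 5 = -(e 5 * e 3) from e_swap _ _,
      show e 4 * e 5 = -(e 5 * e 4) from e_swap _ _]
    module
  -- A 2-form in five 1-form generators cubes to zero.
  rw [hres]
  simp only [Finset.sum_mul, Finset.mul_sum, smul_mul_assoc, mul_smul_comm, Finset.smul_sum]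
  refine Finset.sum_eq_zero fun i1 _ => Finset.sum_eq_zero fun j1 _ =>
    Finset.sum_eq_zero fun i2 _ => Finset.sum_eq_zero fun j2 _ =>
    Finset.sum_eq_zero fun i3 _ => Finset.sum_eq_zero fun j3 _ => ?_
  have := prod6 ![i3, j3, i2, j2, i1, j1]
  simp only [show ∀ x y z w u v : Fin 5, (![x,y,z,w,u,v] : Fin 6 → Fin 5) 0 = x from fun _ _ _ _ _ _ => rfl,
    show ∀ x y z w u v : Fin 5, (![x,y,z,w,u,v] : Fin 6 → Fin 5) 1 = y from fun _ _ _ _ _ _ => rfl,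
    show ∀ x y z w u v : Fin 5, (![x,y,z,w,u,v] : Fin 6 → Fin 5) 2 = z from fun _ _ _ _ _ _ => rfl,
    show ∀ x y z w u v : Fin 5, (![x,y,z,w,u,v] : Fin 6 → Fin 5) 3 = w from fun _ _ _ _ _ _ => rfl,
    show ∀ x y z w u v : Fin 5, (![x,y,z,w,u,v] : Fin 6 → Fin 5) 4 = u from fun _ _ _ _ _ _ => rfl,
    show ∀ x y z w u v : Fin 5, (![x,y,z,w,u,v] : Fin 6 → Fin 5) 5 = v from fun _ _ _ _ _ _ => rfl] at this
  rw [this, smul_zero, smul_zero, smul_zero]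

end
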